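/- arXiv:0808.3291 — 2 statements merged into one kernel-verified Lean document; each statement's English description precedes it below -/
import Mathlib

section
/- Let (\lambda_n) be positive, \Lambda_n = \sum_{i=1}^n \lambda_i, (a_n) non-negative, (b_n) positive, G_n = \prod_{k=1}^n a_k^{\lambda_k/\Lambda_n}. Then for every N \ge 1, \sum_{n=1}^N \Lambda_n (b_n/\lambda_n - 1/\lambda_{n+1}) (\prod_{k=1}^n b_k^{-\Lambda_k/\Lambda_n}) G_n \le \sum_{n=1}^N a_n. -/
open Finset Real

/-!
Put `M n = (∏ k ≤ n, b k ^ (-(Λ k / Λ n))) * G n`. Then `b (n+1) * M (n+1)` is the weighted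
geometric mean of `a (n+1)` and `M n` with weights `λ (n+1) / Λ (n+1)` and `Λ n / Λ (n+1)`, so
weighted AM-GM gives `Λ (n+1) b (n+1) M (n+1) / λ (n+1) ≤ a (n+1) + Λ n M n / λ (n+1)`.
The `n`-th summand is the left side minus `Λ n M n / λ (n+1)`, so the sum telescopes.
-/

lemma sum_Icc_le_sum_add_sub {α : Type*} [AddCommGroup α] [PartialOrder α]
    [IsOrderedAddMonoid α] {x a f : ℕ → α} (h : ∀ n, x (n + 1) + f (n + 1) ≤ a (n + 1) + f n)
    (N : ℕ) : ∑ n ∈ Icc 1 N, x n ≤ ∑ n ∈ Icc 1 N, a n + (f 0 - f N) := by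
  induction N with
  | zero => simp
  | succ N ih =>
    rw [sum_Icc_succ_top (by omega), sum_Icc_succ_top (by omega)]
    have := add_le_add ih (h N)
    rw [← sub_nonneg] at this ⊢
    convert this using 1
    abel

lemma prod_rpow_neg_div_mul_prod_rpow_div {ι : Type*} {s : Finset ι} {lam Lam a b : ι → ℝ}
    (ha : ∀ k, 0 ≤ a k) (hb : ∀ k, 0 ≤ b k) (c : ℝ) :
    (∏ k ∈ s, b k ^ (-(Lam k / c))) * ∏ k ∈ s, a k ^ (lam k / c) =
      (∏ k ∈ s, a k ^ lam k * b k ^ (-Lam k)) ^ c⁻¹ := by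
  rw [← finsetProd_rpow _ _ fun k _ => mul_nonneg (rpow_nonneg (ha k) _) (rpow_nonneg (hb k) _),
    ← prod_mul_distrib]
  refine prod_congr rfl fun k _ => ?_
  rw [mul_rpow (rpow_nonneg (ha k) _) (rpow_nonneg (hb k) _), ← rpow_mul (ha k),
    ← rpow_mul (hb k), mul_comm, neg_mul, div_eq_mul_inv, div_eq_mul_inv]

lemma add_mul_div_mul_rpow_inv_le {l L a b m : ℝ} (hl : 0 < l) (hL : 0 ≤ L) (ha : 0 ≤ a)
    (hb : 0 < b) (hm : 0 ≤ m) :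
    (L + l) * b / l * (m ^ L * (a ^ l * b ^ (-(L + l)))) ^ (L + l)⁻¹ ≤ a + L / l * m := by
  have hLl : 0 < L + l := by positivity
  have hroot : (m ^ L * (a ^ l * b ^ (-(L + l)))) ^ (L + l)⁻¹ =
      a ^ (l / (L + l)) * m ^ (L / (L + l)) / b := by
    rw [mul_rpow (rpow_nonneg hm _) (by positivity),
      mul_rpow (rpow_nonneg ha _) (rpow_nonneg hb.le _), ← rpow_mul hm, ← rpow_mul ha,
      ← rpow_mul hb.le, neg_mul, mul_inv_cancel₀ hLl.ne', rpow_neg_one, ← div_eq_mul_inv L, ← div_eq_mul_inv l]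
    ring
  have hamgm : a ^ (l / (L + l)) * m ^ (L / (L + l)) ≤ l / (L + l) * a + L / (L + l) * m :=
    geom_mean_le_arith_mean2_weighted (by positivity) (by positivity) ha hm (by field_simp; ring)
  calc (L + l) * b / l * (m ^ L * (a ^ l * b ^ (-(L + l)))) ^ (L + l)⁻¹
      = (L + l) / l * (a ^ (l / (L + l)) * m ^ (L / (L + l))) := by
        rw [hroot]; field_simp
    _ ≤ (L + l) / l * (l / (L + l) * a + L / (L + l) * m) := by gcongr
    _ = a + L / l * m := by field_simp

/-- The `M n` of the sketch above, written as one `Lam n`-th root. At `n = 0` it is `1`, as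
`(Lam 0)⁻¹ = 0`. -/
noncomputable def weightedGeomMean (lam Lam a b : ℕ → ℝ) (n : ℕ) : ℝ :=
  (∏ k ∈ Icc 1 n, a k ^ lam k * b k ^ (-Lam k)) ^ (Lam n)⁻¹

section weightedGeomMean

variable {lam Lam a b : ℕ → ℝ}

lemma weightedGeomMean_nonneg (ha : ∀ k, 0 ≤ a k) (hb : ∀ k, 0 < b k) (n : ℕ) :
    0 ≤ weightedGeomMean lam Lam a b n :=
  rpow_nonneg (prod_nonneg fun k _ =>
    mul_nonneg (rpow_nonneg (ha k) _) (rpow_nonneg (hb k).le _)) _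

lemma weightedGeomMean_succ (hlam : ∀ n, 0 < lam n)
    (hLam : ∀ n, Lam n = ∑ i ∈ Icc 1 n, lam i) (ha : ∀ k, 0 ≤ a k) (hb : ∀ k, 0 < b k)
    (n : ℕ) :
    weightedGeomMean lam Lam a b (n + 1) =
      (weightedGeomMean lam Lam a b n ^ Lam n *
        (a (n + 1) ^ lam (n + 1) * b (n + 1) ^ (-Lam (n + 1)))) ^ (Lam (n + 1))⁻¹ := by
  have hpow : weightedGeomMean lam Lam a b n ^ Lam n =
      ∏ k ∈ Icc 1 n, a k ^ lam k * b k ^ (-Lam k) := by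
    cases n with
    | zero => simp [hLam, weightedGeomMean]
    | succ m =>
      refine rpow_inv_rpow (prod_nonneg fun k _ =>
        mul_nonneg (rpow_nonneg (ha k) _) (rpow_nonneg (hb k).le _)) ?_
      rw [hLam]
      exact (sum_pos (fun i _ => hlam i) ⟨1, by simp⟩).ne'
  rw [hpow, weightedGeomMean, prod_Icc_succ_top (by omega)]

lemma weightedGeomMean_succ_le (hlam : ∀ n, 0 < lam n)
    (hLam : ∀ n, Lam n = ∑ i ∈ Icc 1 n, lam i) (ha : ∀ k, 0 ≤ a k) (hb : ∀ k, 0 < b k)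
    (n : ℕ) :
    Lam (n + 1) * b (n + 1) / lam (n + 1) * weightedGeomMean lam Lam a b (n + 1) ≤
      a (n + 1) + Lam n / lam (n + 1) * weightedGeomMean lam Lam a b n := by
  have hLam_succ : Lam (n + 1) = Lam n + lam (n + 1) := by
    rw [hLam, hLam, sum_Icc_succ_top (by omega)]
  rw [weightedGeomMean_succ hlam hLam ha hb, hLam_succ]
  exact add_mul_div_mul_rpow_inv_le (hlam _) (hLam n ▸ sum_nonneg fun i _ => (hlam i).le) (ha _)
    (hb _) (weightedGeomMean_nonneg ha hb n)

end weightedGeomMean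

theorem ineq_5_2_general
    (lam Lam a b G : ℕ → ℝ) (hlam : ∀ n, 0 < lam n)
    (hLam : ∀ n, Lam n = ∑ i ∈ Finset.Icc 1 n, lam i)
    (ha : ∀ n, 0 ≤ a n) (hb : ∀ n, 0 < b n)
    (hG : ∀ n, G n = ∏ k ∈ Finset.Icc 1 n, a k ^ (lam k / Lam n))
    (N : ℕ) :
    ∑ n ∈ Finset.Icc 1 N,
        Lam n * (b n / lam n - 1 / lam (n + 1)) *
          (∏ k ∈ Finset.Icc 1 n, b k ^ (-(Lam k / Lam n))) * G n ≤
      ∑ n ∈ Finset.Icc 1 N, a n := by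
  set M := weightedGeomMean lam Lam a b
  set f : ℕ → ℝ := fun n => Lam n / lam (n + 1) * M n
  have hsummand : ∀ n, Lam n * (b n / lam n - 1 / lam (n + 1)) *
      (∏ k ∈ Icc 1 n, b k ^ (-(Lam k / Lam n))) * G n = Lam n * b n / lam n * M n - f n := by
    intro n
    rw [hG, mul_assoc _ (∏ k ∈ Icc 1 n, _),
      prod_rpow_neg_div_mul_prod_rpow_div ha (fun k => (hb k).le)]
    simp only [f, M, weightedGeomMean]
    ring
  have hf0 : f 0 = 0 := by simp [f, hLam]
  have hfN : 0 ≤ f N := mul_nonneg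
    (div_nonneg (hLam N ▸ sum_nonneg fun i _ => (hlam i).le) (hlam _).le)
    (weightedGeomMean_nonneg ha hb N)
  rw [sum_congr rfl fun n _ => hsummand n]
  calc _ ≤ ∑ n ∈ Icc 1 N, a n + (f 0 - f N) := sum_Icc_le_sum_add_sub (fun n => by
          have := weightedGeomMean_succ_le hlam hLam ha hb n
          simp only [f]
          linarith) N
    _ ≤ ∑ n ∈ Icc 1 N, a n := by linarith

/-- Inequality (5.2) of the paper. -/
theorem ineq_5_2
    (lam Lam a b G : ℕ → ℝ) (hlam : ∀ n, 0 < lam n)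
    (hLam : ∀ n, Lam n = ∑ i ∈ Finset.Icc 1 n, lam i)
    (ha : ∀ n, 0 ≤ a n) (hb : ∀ n, 0 < b n)
    (hG : ∀ n, G n = ∏ k ∈ Finset.Icc 1 n, a k ^ (lam k / Lam n))
    (N : ℕ) (hN : 1 ≤ N) :
    ∑ n ∈ Finset.Icc 1 N,
        Lam n * (b n / lam n - 1 / lam (n + 1)) *
          (∏ k ∈ Finset.Icc 1 n, b k ^ (-(Lam k / Lam n))) * G n ≤
      ∑ n ∈ Finset.Icc 1 N, a n :=
  ineq_5_2_general lam Lam a b G hlam hLam ha hb hG N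
end

section
/- Let (\lambda_n) be positive, \Lambda_n = \sum_{i=1}^n \lambda_i. Suppose M = \sup_n \sum_{k=1}^n (\lambda_k/\Lambda_n)(\Lambda_{k+1}/\lambda_{k+1} - \Lambda_k/\lambda_k) < \infty. Then for any non-negative (a_n) with convergent sum, \sum_{n=1}^\infty \prod_{k=1}^n a_k^{\lambda_k/\Lambda_n} \le e^M \sum_{n=1}^\infty a_n. -/
/-!
Write `μ k = Λ k / λ k`. Weighted AM-GM with the weights `λ k / Λ n` gives
`∏ (μ k * a k) ^ (λ k / Λ n) ≤ Λ n⁻¹ * ∑_{k ≤ n} Λ k * a k`, while summation by parts and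
`log x ≤ x - 1` give `∏ μ k ^ (λ k / Λ n) ≥ exp (-M) * μ (n + 1)`. As
`λ (n + 1) / (Λ n * Λ (n + 1)) = Λ n⁻¹ - Λ (n + 1)⁻¹`, the `n`-th term of the series is at most
`exp M * (Λ n⁻¹ - Λ (n + 1)⁻¹) * ∑_{k ≤ n} Λ k * a k`; exchanging the order of summation, the
coefficient of `a k` telescopes to at most `exp M`.
-/

open Finset Real

theorem sum_Icc_mul_sub_eq_sum_partial_mul_sub {R : Type*} [CommRing R] (c h : ℕ → R) (m : ℕ) :
    ∑ k ∈ Icc 1 m, c k * (h (m + 1) - h k) =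
      ∑ j ∈ Icc 1 m, (∑ k ∈ Icc 1 j, c k) * (h (j + 1) - h j) := by
  induction m with
  | zero => simp
  | succ m ih =>
    rw [sum_Icc_succ_top (by omega), sum_Icc_succ_top (by omega), ← ih,
      sum_Icc_succ_top (by omega)]
    simp only [mul_sub, add_mul, sum_sub_distrib, ← sum_mul]
    ring

theorem sum_range_add_one_eq_sum_Icc {M : Type*} [AddCommMonoid M] (f : ℕ → M) (N : ℕ) :
    ∑ n ∈ range N, f (n + 1) = ∑ m ∈ Icc 1 N, f m := by
  rw [range_eq_Ico, sum_Ico_add', Ico_add_one_right_eq_Icc, zero_add]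

theorem sum_partial_mul_inv_sub_inv_le {Lam a : ℕ → ℝ} (hLam : ∀ k, 1 ≤ k → 0 < Lam k)
    (ha : ∀ k, 0 ≤ a k) (N : ℕ) :
    ∑ m ∈ Icc 1 N, (∑ k ∈ Icc 1 m, Lam k * a k) * ((Lam m)⁻¹ - (Lam (m + 1))⁻¹) ≤
      ∑ k ∈ Icc 1 N, a k := by
  have abel := sum_Icc_mul_sub_eq_sum_partial_mul_sub (fun k => Lam k * a k)
    (fun k => -(Lam k)⁻¹) N
  simp only [neg_sub_neg] at abel
  rw [← abel]
  refine sum_le_sum fun k hk => ?_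
  have hΛk := hLam k (mem_Icc.mp hk).1
  have hΛN := hLam (N + 1) (by omega)
  calc Lam k * a k * ((Lam k)⁻¹ - (Lam (N + 1))⁻¹) = a k - Lam k * a k / Lam (N + 1) := by
        field_simp
    _ ≤ a k := sub_le_self _ (by have := ha k; positivity)

section WeightedCarleman

variable {lam Lam : ℕ → ℝ}

theorem Lam_pos (hlam : ∀ n, 0 < lam n) (hLam : ∀ n, Lam n = ∑ i ∈ Icc 1 n, lam i) {m : ℕ}
    (hm : 1 ≤ m) : 0 < Lam m := by
  rw [hLam]
  exact sum_pos (fun i _ => hlam i) (nonempty_Icc.mpr hm)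

theorem sum_div_Lam_eq_one (hlam : ∀ n, 0 < lam n) (hLam : ∀ n, Lam n = ∑ i ∈ Icc 1 n, lam i)
    {m : ℕ} (hm : 1 ≤ m) : ∑ k ∈ Icc 1 m, lam k / Lam m = 1 := by
  rw [← sum_div, ← hLam, div_self (Lam_pos hlam hLam hm).ne']

theorem sum_mul_log_sub_le (hlam : ∀ n, 0 < lam n) (hLam : ∀ n, Lam n = ∑ i ∈ Icc 1 n, lam i)
    (m : ℕ) :
    ∑ k ∈ Icc 1 m, lam k * (log (Lam (m + 1) / lam (m + 1)) - log (Lam k / lam k)) ≤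
      ∑ k ∈ Icc 1 m, lam k * (Lam (k + 1) / lam (k + 1) - Lam k / lam k) := by
  rw [sum_Icc_mul_sub_eq_sum_partial_mul_sub lam (fun k => log (Lam k / lam k))]
  refine sum_le_sum fun j hj => ?_
  rw [← hLam]
  have hΛj := Lam_pos hlam hLam (mem_Icc.mp hj).1
  have hμj : 0 < Lam j / lam j := div_pos hΛj (hlam j)
  have hμj1 : 0 < Lam (j + 1) / lam (j + 1) := div_pos (Lam_pos hlam hLam (by omega)) (hlam _)
  have hlj := (hlam j).ne'
  calc Lam j * (log (Lam (j + 1) / lam (j + 1)) - log (Lam j / lam j))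
      ≤ Lam j * ((Lam (j + 1) / lam (j + 1)) / (Lam j / lam j) - 1) := by
        rw [← log_div hμj1.ne' hμj.ne']
        gcongr
        exact log_le_sub_one_of_pos (div_pos hμj1 hμj)
    _ = lam j * (Lam (j + 1) / lam (j + 1) - Lam j / lam j) := by
        field_simp

theorem exp_neg_mul_le_prod_rpow (hlam : ∀ n, 0 < lam n)
    (hLam : ∀ n, Lam n = ∑ i ∈ Icc 1 n, lam i) {M : ℝ} {m : ℕ} (hm : 1 ≤ m)
    (hM : ∑ k ∈ Icc 1 m, lam k / Lam m * (Lam (k + 1) / lam (k + 1) - Lam k / lam k) ≤ M) :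
    exp (-M) * (Lam (m + 1) / lam (m + 1)) ≤
      ∏ k ∈ Icc 1 m, (Lam k / lam k) ^ (lam k / Lam m) := by
  have hΛm := Lam_pos hlam hLam hm
  have hμ : ∀ k, 1 ≤ k → 0 < Lam k / lam k := fun k hk => div_pos (Lam_pos hlam hLam hk) (hlam k)
  have hweighted : ∑ k ∈ Icc 1 m, lam k / Lam m *
      (log (Lam (m + 1) / lam (m + 1)) - log (Lam k / lam k)) ≤ M :=
    calc _ = (∑ k ∈ Icc 1 m, lam k *
          (log (Lam (m + 1) / lam (m + 1)) - log (Lam k / lam k))) / Lam m := by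
          rw [sum_div]; exact sum_congr rfl fun k _ => div_mul_eq_mul_div ..
      _ ≤ (∑ k ∈ Icc 1 m, lam k * (Lam (k + 1) / lam (k + 1) - Lam k / lam k)) / Lam m :=
          div_le_div_of_nonneg_right (sum_mul_log_sub_le hlam hLam m) hΛm.le
      _ = _ := by rw [sum_div]; exact sum_congr rfl fun k _ => (div_mul_eq_mul_div ..).symm
      _ ≤ M := hM
  simp only [mul_sub, sum_sub_distrib, ← sum_mul, sum_div_Lam_eq_one hlam hLam hm,
    one_mul] at hweighted
  have hprod : ∏ k ∈ Icc 1 m, (Lam k / lam k) ^ (lam k / Lam m) =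
      exp (∑ k ∈ Icc 1 m, lam k / Lam m * log (Lam k / lam k)) := by
    rw [exp_sum]
    exact prod_congr rfl fun k hk => by rw [rpow_def_of_pos (hμ k (mem_Icc.mp hk).1), mul_comm]
  rw [hprod, ← exp_log (hμ (m + 1) (by omega)), ← exp_add]
  gcongr
  linarith

theorem prod_rpow_le_exp_mul_sum (hlam : ∀ n, 0 < lam n)
    (hLam : ∀ n, Lam n = ∑ i ∈ Icc 1 n, lam i) {a : ℕ → ℝ} (ha : ∀ n, 0 ≤ a n) {M : ℝ} {m : ℕ}
    (hm : 1 ≤ m)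
    (hM : ∑ k ∈ Icc 1 m, lam k / Lam m * (Lam (k + 1) / lam (k + 1) - Lam k / lam k) ≤ M) :
    ∏ k ∈ Icc 1 m, a k ^ (lam k / Lam m) ≤
      exp M * ((∑ k ∈ Icc 1 m, Lam k * a k) * ((Lam m)⁻¹ - (Lam (m + 1))⁻¹)) := by
  have hΛm := Lam_pos hlam hLam hm
  have hμ : ∀ k ∈ Icc 1 m, 0 ≤ Lam k / lam k := fun k hk =>
    (div_pos (Lam_pos hlam hLam (mem_Icc.mp hk).1) (hlam k)).le
  have hsplit : ∏ k ∈ Icc 1 m, (Lam k / lam k * a k) ^ (lam k / Lam m) =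
      (∏ k ∈ Icc 1 m, (Lam k / lam k) ^ (lam k / Lam m)) *
        ∏ k ∈ Icc 1 m, a k ^ (lam k / Lam m) := by
    rw [← prod_mul_distrib]
    exact prod_congr rfl fun k hk => mul_rpow (hμ k hk) (ha k)
  have amgm : ∏ k ∈ Icc 1 m, (Lam k / lam k * a k) ^ (lam k / Lam m) ≤
      (∑ k ∈ Icc 1 m, Lam k * a k) / Lam m := by
    refine (geom_mean_le_arith_mean_weighted _ _ _ (fun k _ => by have := hlam k; positivity)
      (sum_div_Lam_eq_one hlam hLam hm) fun k hk => mul_nonneg (hμ k hk) (ha k)).trans_eq ?_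
    rw [sum_div]
    refine sum_congr rfl fun k _ => ?_
    have := (hlam k).ne'
    field_simp
  have hQ := exp_neg_mul_le_prod_rpow hlam hLam hm hM
  have hQpos : 0 < exp (-M) * (Lam (m + 1) / lam (m + 1)) :=
    mul_pos (exp_pos _) (div_pos (Lam_pos hlam hLam (by omega)) (hlam _))
  have hSum : 0 ≤ ∑ k ∈ Icc 1 m, Lam k * a k := sum_nonneg fun k hk =>
    mul_nonneg (Lam_pos hlam hLam (mem_Icc.mp hk).1).le (ha k)
  calc ∏ k ∈ Icc 1 m, a k ^ (lam k / Lam m)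
      = (∏ k ∈ Icc 1 m, (Lam k / lam k * a k) ^ (lam k / Lam m)) /
          ∏ k ∈ Icc 1 m, (Lam k / lam k) ^ (lam k / Lam m) := by
        rw [hsplit, mul_div_cancel_left₀ _ (hQpos.trans_le hQ).ne']
    _ ≤ ((∑ k ∈ Icc 1 m, Lam k * a k) / Lam m) / (exp (-M) * (Lam (m + 1) / lam (m + 1))) :=
        div_le_div₀ (div_nonneg hSum hΛm.le) amgm hQpos hQ
    _ = exp M * ((∑ k ∈ Icc 1 m, Lam k * a k) * ((Lam m)⁻¹ - (Lam (m + 1))⁻¹)) := by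
        rw [hLam (m + 1), sum_Icc_succ_top (by omega), ← hLam, exp_neg]
        have : Lam m + lam (m + 1) ≠ 0 := by have := hlam (m + 1); positivity
        field_simp
        ring

end WeightedCarleman

/-- Corollary 2: weighted Carleman's inequality with constant `e^M`. -/
theorem weighted_carleman_sum (M : ℝ)
    (lam Lam : ℕ → ℝ) (hlam : ∀ n, 0 < lam n)
    (hLam : ∀ n, Lam n = ∑ i ∈ Finset.Icc 1 n, lam i)
    (hbdd : BddAbove (Set.range fun n : ℕ =>
      ∑ k ∈ Finset.Icc 1 (n + 1),
        (lam k / Lam (n + 1)) * (Lam (k + 1) / lam (k + 1) - Lam k / lam k)))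
    (hMdef : M = ⨆ n : ℕ, ∑ k ∈ Finset.Icc 1 (n + 1),
      (lam k / Lam (n + 1)) * (Lam (k + 1) / lam (k + 1) - Lam k / lam k))
    (a : ℕ → ℝ) (ha : ∀ n, 0 ≤ a n)
    (hs : Summable fun n : ℕ => a (n + 1)) :
    ∑' n : ℕ, ∏ k ∈ Finset.Icc 1 (n + 1), a k ^ (lam k / Lam (n + 1)) ≤
      Real.exp M * ∑' n : ℕ, a (n + 1) := by
  have hM : ∀ m, 1 ≤ m →
      ∑ k ∈ Icc 1 m, lam k / Lam m * (Lam (k + 1) / lam (k + 1) - Lam k / lam k) ≤ M := by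
    intro m hm
    obtain ⟨n, rfl⟩ := Nat.exists_eq_add_of_le' hm
    exact hMdef ▸ le_ciSup hbdd n
  refine tsum_le_of_sum_range_le (fun n => prod_nonneg fun k _ => rpow_nonneg (ha k) _)
    fun N => ?_
  rw [sum_range_add_one_eq_sum_Icc (fun m => ∏ k ∈ Icc 1 m, a k ^ (lam k / Lam m))]
  calc ∑ m ∈ Icc 1 N, ∏ k ∈ Icc 1 m, a k ^ (lam k / Lam m)
      ≤ ∑ m ∈ Icc 1 N,
          exp M * ((∑ k ∈ Icc 1 m, Lam k * a k) * ((Lam m)⁻¹ - (Lam (m + 1))⁻¹)) :=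
        sum_le_sum fun m hm =>
          prod_rpow_le_exp_mul_sum hlam hLam ha (mem_Icc.mp hm).1 (hM m (mem_Icc.mp hm).1)
    _ ≤ exp M * ∑ k ∈ Icc 1 N, a k := by
        rw [← mul_sum]
        exact mul_le_mul_of_nonneg_left
          (sum_partial_mul_inv_sub_inv_le (fun k => Lam_pos hlam hLam) ha N) (exp_pos M).le
    _ ≤ exp M * ∑' n, a (n + 1) := by
        rw [← sum_range_add_one_eq_sum_Icc]
        gcongr
        exact hs.sum_le_tsum _ fun n _ => ha (n + 1)
end
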